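/- Let ξ be a random variable with density f supported on [0,∞), t > 0 with F(t) = ∫₀^∞ f(v−t)²/f(v) dv − 1 finite and positive, and let φ: [0,∞) → ℝ be bounded measurable with E[φ(ξ+t)] = (1 − ε) E[φ(ξ)] for some ε ∈ (0,1] and E[φ(ξ)] > 0. Then Var(φ(ξ)) ≥ ε² E[φ(ξ)]² / F(t) > 0; in particular φ(ξ) is not almost surely constant. -/

import Mathlib

open MeasureTheory Set

/-- Chapman–Robbins plus the quantitative decay `E[φ(ξ+t)] = (1-ε) E[φ(ξ)]`
yields strict positivity of the variance:
`Var(φ(ξ)) ≥ ε² E[φ(ξ)]² / F(t) > 0`. -/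
theorem stmt19 (f : ℝ → ℝ) (hf_meas : Measurable f)
    (hf_nonneg : ∀ v, 0 ≤ f v) (hf_zero : ∀ v < 0, f v = 0)
    (hf_pos : ∀ v ≥ 0, 0 < f v)
    (hf_int : ∫ v in Ioi (0:ℝ), f v = 1)
    (t : ℝ) (ht : 0 < t)
    (hJ_int : IntegrableOn (fun v => (f (v - t))^2 / f v) (Ioi 0))
    (F : ℝ) (hF : F = (∫ v in Ioi (0:ℝ), (f (v - t))^2 / f v) - 1) (hFpos : 0 < F)
    (φ : ℝ → ℝ) (hφ_meas : Measurable φ) (hφ_bdd : ∃ B, ∀ x, |φ x| ≤ B)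
    (ε : ℝ) (hε : ε ∈ Set.Ioc (0:ℝ) 1)
    (h_dec : (∫ v in Ioi (0:ℝ), φ (v + t) * f v) =
      (1 - ε) * ∫ v in Ioi (0:ℝ), φ v * f v)
    (h_pos : 0 < ∫ v in Ioi (0:ℝ), φ v * f v) :
    ((∫ v in Ioi (0:ℝ), (φ v)^2 * f v) - (∫ v in Ioi (0:ℝ), φ v * f v)^2 ≥
        ε^2 * (∫ v in Ioi (0:ℝ), φ v * f v)^2 / F) ∧
      0 < ε^2 * (∫ v in Ioi (0:ℝ), φ v * f v)^2 / F := by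
  obtain ⟨hε0, hε1⟩ := hε
  obtain ⟨B, hB⟩ := hφ_bdd
  set I := ∫ v in Ioi (0:ℝ), φ v * f v with hIdef
  have hS : MeasurableSet (Ioi (0:ℝ)) := measurableSet_Ioi
  have hf_i : IntegrableOn f (Ioi 0) := by
    by_contra h
    rw [integral_undef h] at hf_int; norm_num at hf_int
  have h0ae : ∀ᵐ v : ℝ, v ≠ 0 := by
    rw [ae_iff]
    refine measure_mono_null (fun v hv => ?_) (measure_singleton (0:ℝ))
    simpa using hv
  have hIic0 : (fun v => f v) =ᵐ[volume.restrict (Iic (0:ℝ))] 0 := by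
    filter_upwards [ae_restrict_mem measurableSet_Iic,
      (ae_restrict_of_ae (μ := volume) (s := Iic 0) h0ae)] with v hv hv0
    exact hf_zero v (lt_of_le_of_ne hv hv0)
  have hf_Iic : IntegrableOn f (Iic 0) :=
    (integrable_zero _ _ _).congr hIic0.symm
  have hf_glob : Integrable f := by
    have := hf_Iic.union hf_i
    rwa [Iic_union_Ioi, integrableOn_univ] at this
  have hft_glob : Integrable (fun v => f (v - t)) := hf_glob.comp_sub_right t
  have hft_i : IntegrableOn (fun v => f (v - t)) (Ioi 0) := hft_glob.integrableOn
  have hftot : ∫ v : ℝ, f v = 1 := by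
    have hc : ∫ v in (Ioi (0:ℝ))ᶜ, f v = 0 := by
      rw [compl_Ioi]; exact integral_eq_zero_of_ae hIic0
    have := integral_add_compl hS hf_glob (f := f)
    rw [hf_int, hc] at this; linarith
  have hft_int : ∫ v in Ioi (0:ℝ), f (v - t) = 1 := by
    have h2 : ∫ v : ℝ, f (v - t) = 1 := by
      rw [integral_sub_right_eq_self f t]; exact hftot
    have h3 : ∫ v in (Ioi (0:ℝ))ᶜ, f (v - t) = 0 := by
      rw [compl_Ioi]
      apply integral_eq_zero_of_ae
      filter_upwards [ae_restrict_mem measurableSet_Iic] with v hv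
      exact hf_zero _ (by simp only [mem_Iic] at hv; linarith)
    have := integral_add_compl hS hft_glob (f := fun v => f (v - t))
    rw [h2, h3] at this; linarith
  -- bounded multiplications
  have hBn : ∀ᵐ x ∂(volume.restrict (Ioi (0:ℝ))), ‖φ x‖ ≤ B :=
    ae_of_all _ fun x => by simpa using hB x
  have hφm : AEStronglyMeasurable φ (volume.restrict (Ioi (0:ℝ))) :=
    hφ_meas.aestronglyMeasurable
  have hφf_i : IntegrableOn (fun v => φ v * f v) (Ioi 0) := hf_i.bdd_mul hφm hBn
  have hφ2f_i : IntegrableOn (fun v => (φ v)^2 * f v) (Ioi 0) := by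
    have h1 : IntegrableOn (fun v => φ v * (φ v * f v)) (Ioi 0) := hφf_i.bdd_mul hφm hBn
    exact h1.congr_fun (fun v _ => by ring) hS
  have hφft_i : IntegrableOn (fun v => φ v * f (v - t)) (Ioi 0) := hft_i.bdd_mul hφm hBn
  -- shift identity
  have hshift : ∫ v in Ioi (0:ℝ), φ v * f (v - t) = ∫ v in Ioi (0:ℝ), φ (v + t) * f v := by
    have e1 : ∫ v in Ioi (0:ℝ), φ v * f (v - t)
        = ∫ v : ℝ, (Ioi (0:ℝ)).indicator (fun v => φ v * f (v - t)) v :=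
      (integral_indicator hS).symm
    rw [e1, ← integral_add_right_eq_self ((Ioi (0:ℝ)).indicator (fun v => φ v * f (v - t))) t]
    have e2 : (fun v => (Ioi (0:ℝ)).indicator (fun v => φ v * f (v - t)) (v + t))
        =ᵐ[volume] (Ioi (0:ℝ)).indicator (fun v => φ (v + t) * f v) := by
      filter_upwards [h0ae] with v hv0
      by_cases h : v ∈ Ioi (0:ℝ)
      · rw [indicator_of_mem h]
        have hm : v + t ∈ Ioi (0:ℝ) := by simp only [mem_Ioi] at h ⊢; linarith
        rw [indicator_of_mem hm]
        simp
      · rw [indicator_of_notMem h]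
        simp only [mem_Ioi, not_lt] at h
        rcases lt_or_eq_of_le h with hv | hv
        · by_cases h2 : v + t ∈ Ioi (0:ℝ)
          · rw [indicator_of_mem h2]
            simp [hf_zero v hv]
          · rw [indicator_of_notMem h2]
        · exact absurd hv hv0
    rw [integral_congr_ae e2, integral_indicator hS]
  have hφft_val : ∫ v in Ioi (0:ℝ), φ v * f (v - t) = (1 - ε) * I := by
    rw [hshift, h_dec]
  -- first key integral : ∫ (φ - I)(f - f(·-t)) = ε I
  have hIf_i : IntegrableOn (fun v => I * f v) (Ioi 0) := hf_i.const_mul I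
  have hIft_i : IntegrableOn (fun v => I * f (v - t)) (Ioi 0) := hft_i.const_mul I
  have i1 : IntegrableOn (fun v => φ v * f v - φ v * f (v - t)) (Ioi 0) := hφf_i.sub hφft_i
  have i2 : IntegrableOn (fun v => I * f v - I * f (v - t)) (Ioi 0) := hIf_i.sub hIft_i
  have hQ : ∫ v in Ioi (0:ℝ), (φ v - I) * (f v - f (v - t)) = ε * I := by
    have e : (fun v => (φ v - I) * (f v - f (v - t)))
        = fun v => (φ v * f v - φ v * f (v - t)) - (I * f v - I * f (v - t)) :=
      funext fun v => by ring
    rw [e, integral_sub i1 i2, integral_sub hφf_i hφft_i, integral_sub hIf_i hIft_i,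
      integral_const_mul _ _, integral_const_mul _ _, hf_int, hft_int, hφft_val, ← hIdef]
    ring
  -- second key integral : ∫ (f - f(·-t))² / f = F
  have h2ft_i : IntegrableOn (fun v => 2 * f (v - t)) (Ioi 0) := hft_i.const_mul 2
  have isum : IntegrableOn (fun v => f v - 2 * f (v - t)) (Ioi 0) := hf_i.sub h2ft_i
  have hCeq : ∫ v in Ioi (0:ℝ), (f v - f (v - t))^2 / f v = F := by
    have eOn : EqOn (fun v => (f v - f (v - t))^2 / f v)
        (fun v => (f v - 2 * f (v - t)) + (f (v - t))^2 / f v) (Ioi 0) := by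
      intro v hv
      have hfv : f v ≠ 0 := (hf_pos v (le_of_lt hv)).ne'
      field_simp
      ring
    rw [setIntegral_congr_fun hS eOn, integral_add isum hJ_int, integral_sub hf_i h2ft_i,
      integral_const_mul _ _, hft_int, hf_int, hF]
    ring
  have hg2_i : IntegrableOn (fun v => (f v - f (v - t))^2 / f v) (Ioi 0) := by
    have eOn : EqOn (fun v => (f v - 2 * f (v - t)) + (f (v - t))^2 / f v)
        (fun v => (f v - f (v - t))^2 / f v) (Ioi 0) := by
      intro v hv
      have hfv : f v ≠ 0 := (hf_pos v (le_of_lt hv)).ne'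
      field_simp
      ring
    have hsum2 : IntegrableOn (fun v => (f v - 2 * f (v - t)) + (f (v - t))^2 / f v) (Ioi 0) :=
      isum.add hJ_int
    exact hsum2.congr_fun eOn hS
  -- integrability of the quadratic pieces
  have hsubm : AEStronglyMeasurable (fun v => φ v - I) (volume.restrict (Ioi (0:ℝ))) :=
    (hφ_meas.sub measurable_const).aestronglyMeasurable
  have hsubB : ∀ᵐ x ∂(volume.restrict (Ioi (0:ℝ))), ‖φ x - I‖ ≤ B + |I| :=
    ae_of_all _ fun x => (norm_sub_le _ _).trans (by
      simp only [Real.norm_eq_abs]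
      have := hB x; linarith [le_abs_self I, abs_nonneg I])
  have hA_i : IntegrableOn (fun v => (φ v - I)^2 * f v) (Ioi 0) := by
    have h1 : IntegrableOn (fun v => (φ v - I) * f v) (Ioi 0) := hf_i.bdd_mul hsubm hsubB
    have h2 : IntegrableOn (fun v => (φ v - I) * ((φ v - I) * f v)) (Ioi 0) :=
      h1.bdd_mul hsubm hsubB
    exact h2.congr_fun (fun v _ => by ring) hS
  have hgsub_i : IntegrableOn (fun v => f v - f (v - t)) (Ioi 0) := hf_i.sub hft_i
  have hQ_i : IntegrableOn (fun v => (φ v - I) * (f v - f (v - t))) (Ioi 0) :=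
    hgsub_i.bdd_mul hsubm hsubB
  set A := ∫ v in Ioi (0:ℝ), (φ v - I)^2 * f v with hAdef
  -- variance identity
  have h2Iφf_i : IntegrableOn (fun v => 2 * I * (φ v * f v)) (Ioi 0) := hφf_i.const_mul (2 * I)
  have hI2f_i : IntegrableOn (fun v => I^2 * f v) (Ioi 0) := hf_i.const_mul (I^2)
  have idiff : IntegrableOn (fun v => (φ v)^2 * f v - 2 * I * (φ v * f v)) (Ioi 0) :=
    hφ2f_i.sub h2Iφf_i
  have hAvar : A = (∫ v in Ioi (0:ℝ), (φ v)^2 * f v) - I^2 := by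
    have e : (fun v => (φ v - I)^2 * f v)
        = fun v => ((φ v)^2 * f v - 2 * I * (φ v * f v)) + I^2 * f v :=
      funext fun v => by ring
    rw [hAdef, e, integral_add idiff hI2f_i, integral_sub hφ2f_i h2Iφf_i,
      integral_const_mul _ _, integral_const_mul _ _, hf_int, ← hIdef]
    ring
  -- Cauchy–Schwarz via quadratic in λ
  have key : ∀ lam : ℝ, 0 ≤ A - 2 * lam * (ε * I) + lam^2 * F := by
    intro lam
    have j1 : IntegrableOn (fun v => 2 * lam * ((φ v - I) * (f v - f (v - t)))) (Ioi 0) :=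
      hQ_i.const_mul (2 * lam)
    have j2 : IntegrableOn (fun v => lam^2 * ((f v - f (v - t))^2 / f v)) (Ioi 0) :=
      hg2_i.const_mul (lam^2)
    have j3 : IntegrableOn
        (fun v => (φ v - I)^2 * f v - 2 * lam * ((φ v - I) * (f v - f (v - t)))) (Ioi 0) :=
      hA_i.sub j1
    have hnn : 0 ≤ ∫ v in Ioi (0:ℝ),
        ((φ v - I)^2 * f v - 2 * lam * ((φ v - I) * (f v - f (v - t)))
          + lam^2 * ((f v - f (v - t))^2 / f v)) := by
      apply setIntegral_nonneg hS
      intro v hv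
      have hfv : 0 < f v := hf_pos v (le_of_lt hv)
      have e : (φ v - I)^2 * f v - 2 * lam * ((φ v - I) * (f v - f (v - t)))
          + lam^2 * ((f v - f (v - t))^2 / f v)
          = ((φ v - I) * f v - lam * (f v - f (v - t)))^2 / f v := by
        field_simp
        ring
      rw [e]
      positivity
    rw [integral_add j3 j2, integral_sub hA_i j1, integral_const_mul _ _, integral_const_mul _ _,
      hQ, hCeq, ← hAdef] at hnn
    linarith
  have hmain : A ≥ ε^2 * I^2 / F := by
    have hk := key (ε * I / F)
    have hF0 : F ≠ 0 := ne_of_gt hFpos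
    have h2 : 2 * (ε * I / F) * (ε * I) = 2 * (ε^2 * I^2 / F) := by field_simp
    have h3 : (ε * I / F)^2 * F = ε^2 * I^2 / F := by field_simp
    rw [h2, h3] at hk
    linarith
  refine ⟨?_, by positivity⟩
  have := hmain
  rw [hAvar] at this
  exact this
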